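/- arXiv:1804.09831 — 2 statements merged into one kernel-verified Lean document; each statement's English description precedes it below -/
import Mathlib

section
/- Closed-loop constraint satisfaction from tube containment: if F s_t + G v_t ≤ f − h with h_k = sup_{e∈𝓔} ((F + GK)e)_k, and x_t = s_t + e_t with e_t ∈ 𝓔, u_t = K e_t + v_t, then F x_t + G u_t ≤ f. -/
/-!
Splitting `x = s + e` and `u = K e + v` gives `F x + G u = (F s + G v) + (F + G K) e`.
Row by row, the second term is at most the support value `h k` of the compact error set,
so the tightened nominal constraint `F s + G v ≤ f - h` absorbs it.
-/

open Matrix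

theorem Matrix.mulVec_add_add_mulVec_feedback {ι κ μ α : Type*} [Fintype κ] [Fintype μ]
    [NonUnitalSemiring α] (F : Matrix ι κ α) (G : Matrix ι μ α) (K : Matrix μ κ α)
    (s e : κ → α) (v : μ → α) :
    F *ᵥ (s + e) + G *ᵥ (K *ᵥ e + v) = (F *ᵥ s + G *ᵥ v) + (F + G * K) *ᵥ e := by
  rw [mulVec_add, mulVec_add, add_mulVec, mulVec_mulVec]
  abel

theorem IsCompact.le_sSup_image {X : Type*} [TopologicalSpace X] {E : Set X} {φ : X → ℝ}
    (hE : IsCompact E) (hφ : ContinuousOn φ E) {x : X} (hx : x ∈ E) :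
    φ x ≤ sSup (φ '' E) :=
  le_csSup (hE.bddAbove_image hφ) (Set.mem_image_of_mem φ hx)

theorem stmt_17_general {n m q : ℕ} (𝓔 : Set (Fin n → ℝ))
    (h𝓔c : IsCompact 𝓔)
    (F : Matrix (Fin q) (Fin n) ℝ) (G : Matrix (Fin q) (Fin m) ℝ)
    (K : Matrix (Fin m) (Fin n) ℝ) (f : Fin q → ℝ) (h : Fin q → ℝ)
    (hh : ∀ k, h k = sSup ((fun e => (F + G * K).mulVec e k) '' 𝓔))
    (s x e : Fin n → ℝ) (v u : Fin m → ℝ)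
    (hfeas : ∀ k, F.mulVec s k + G.mulVec v k ≤ f k - h k)
    (hx : x = s + e) (he : e ∈ 𝓔) (hu : u = K.mulVec e + v) :
    ∀ k, F.mulVec x k + G.mulVec u k ≤ f k := by
  intro k
  have herror : ((F + G * K) *ᵥ e) k ≤ h k := by
    rw [hh k]
    exact h𝓔c.le_sSup_image (φ := fun e => ((F + G * K) *ᵥ e) k) (by fun_prop) he
  have hsplit := congrFun (Matrix.mulVec_add_add_mulVec_feedback F G K s e v) k
  simp only [Pi.add_apply] at hsplit
  rw [hx, hu, hsplit]
  linarith [hfeas k]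

theorem stmt_17 {n m q : ℕ} (𝓔 : Set (Fin n → ℝ)) (h𝓔ne : 𝓔.Nonempty)
    (h𝓔c : IsCompact 𝓔)
    (F : Matrix (Fin q) (Fin n) ℝ) (G : Matrix (Fin q) (Fin m) ℝ)
    (K : Matrix (Fin m) (Fin n) ℝ) (f : Fin q → ℝ) (h : Fin q → ℝ)
    (hh : ∀ k, h k = sSup ((fun e => (F + G * K).mulVec e k) '' 𝓔))
    (s x e : Fin n → ℝ) (v u : Fin m → ℝ)
    (hfeas : ∀ k, F.mulVec s k + G.mulVec v k ≤ f k - h k)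
    (hx : x = s + e) (he : e ∈ 𝓔) (hu : u = K.mulVec e + v) :
    ∀ k, F.mulVec x k + G.mulVec u k ≤ f k :=
  stmt_17_general 𝓔 h𝓔c F G K f h hh s x e v u hfeas hx he hu
end

section
/- The infinite Minkowski-sum set 𝓔 = {∑_{i=0}^{∞} Ψ^i d_i : d_i ∈ D} (with ‖Ψ‖ < 1, D compact convex containing 0) is the minimal set among closed sets S satisfying Ψ(S) + D ⊆ S and 0 ∈ S: any closed S with these properties contains 𝓔. -/
open Pointwise Finset

namespace ContinuousLinearMap

variable {R E : Type*} [Semiring R] [TopologicalSpace E] [AddCommMonoid E] [Module R E]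
  {Ψ : E →L[R] E} {S D : Set E}

theorem sum_range_succ_pow_apply (Ψ : E →L[R] E) (d : ℕ → E) (N : ℕ) :
    ∑ i ∈ range (N + 1), (Ψ ^ i) (d i) = Ψ (∑ i ∈ range N, (Ψ ^ i) (d (i + 1))) + d 0 := by
  rw [sum_range_succ', map_sum]
  simp only [pow_succ', mul_apply_eq_comp, pow_zero, one_apply_eq_self]

theorem sum_range_pow_apply_mem (hS0 : 0 ∈ S) (hS : Ψ '' S + D ⊆ S) (N : ℕ) :
    ∀ d : ℕ → E, (∀ i, d i ∈ D) → ∑ i ∈ range N, (Ψ ^ i) (d i) ∈ S := by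
  induction N with
  | zero => exact fun _ _ => by simpa using hS0
  | succ N ih =>
    intro d hd
    rw [sum_range_succ_pow_apply]
    exact hS (Set.add_mem_add (Set.mem_image_of_mem Ψ (ih _ fun i => hd _)) (hd 0))

theorem mem_of_hasSum_pow_apply (hSc : IsClosed S) (hS0 : 0 ∈ S) (hS : Ψ '' S + D ⊆ S)
    {d : ℕ → E} (hd : ∀ i, d i ∈ D) {x : E} (hx : HasSum (fun i => (Ψ ^ i) (d i)) x) :
    x ∈ S :=
  hSc.mem_of_tendsto hx.tendsto_sum_nat
    (Filter.Eventually.of_forall fun N => sum_range_pow_apply_mem hS0 hS N d hd)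

end ContinuousLinearMap

theorem stmt_18_general {n : ℕ}
    (Ψ : EuclideanSpace ℝ (Fin n) →L[ℝ] EuclideanSpace ℝ (Fin n))
    (D : Set (EuclideanSpace ℝ (Fin n)))
    (𝓔 : Set (EuclideanSpace ℝ (Fin n)))
    (h𝓔 : 𝓔 = {x | ∃ d : ℕ → EuclideanSpace ℝ (Fin n),
      (∀ i, d i ∈ D) ∧ HasSum (fun i => (Ψ ^ i) (d i)) x}) :
    ∀ S : Set (EuclideanSpace ℝ (Fin n)), IsClosed S →
      (0 : EuclideanSpace ℝ (Fin n)) ∈ S → ⇑Ψ '' S + D ⊆ S → 𝓔 ⊆ S := by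
  rintro S hSc hS0 hS x hx
  rw [h𝓔] at hx
  obtain ⟨d, hd, hsum⟩ := hx
  exact ContinuousLinearMap.mem_of_hasSum_pow_apply hSc hS0 hS hd hsum

theorem stmt_18 {n : ℕ}
    (Ψ : EuclideanSpace ℝ (Fin n) →L[ℝ] EuclideanSpace ℝ (Fin n)) (hΨ : ‖Ψ‖ < 1)
    (D : Set (EuclideanSpace ℝ (Fin n))) (hDc : IsCompact D) (hDconv : Convex ℝ D)
    (hD0 : (0 : EuclideanSpace ℝ (Fin n)) ∈ D)
    (𝓔 : Set (EuclideanSpace ℝ (Fin n)))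
    (h𝓔 : 𝓔 = {x | ∃ d : ℕ → EuclideanSpace ℝ (Fin n),
      (∀ i, d i ∈ D) ∧ HasSum (fun i => (Ψ ^ i) (d i)) x}) :
    ∀ S : Set (EuclideanSpace ℝ (Fin n)), IsClosed S →
      (0 : EuclideanSpace ℝ (Fin n)) ∈ S → ⇑Ψ '' S + D ⊆ S → 𝓔 ⊆ S :=
  stmt_18_general Ψ D 𝓔 h𝓔
end
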